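/- Let a, b, c, d be complex numbers with |a| = |b| = |c| = |d| = 1, a + c ≠ 0 and b + d ≠ 0. Suppose z ∈ ℂ satisfies |z − 2ac/(a+c)| = |a − 2ac/(a+c)| and |z − 2bd/(b+d)| = |b − 2bd/(b+d)| (i.e., z lies both on the circle through a and c orthogonal to the unit circle and on the circle through b and d orthogonal to the unit circle). Then z satisfies the quadratic equation (a − b + c − d)z² − 2(ac − bd)z + (ac(b+d) − bd(a+c)) = 0. -/

import Mathlib

/-!
For `|a| = |c| = 1` the centre `p = 2ac/(a+c)` has `conj p = 2/(a+c)`, so the circle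
`|z - p| = |a - p|` reads `|z|² + 1 = (2z + 2ac z̄)/(a+c)`: linear in `z̄` once `w = |z|² + 1` is
treated as an unknown. Eliminating `z̄` between the two circles (using `z z̄ = w - 1`) leaves
`w · Q(z) = 0` for the quadratic `Q`, and `w > 0`.
-/

open Complex ComplexConjugate

lemma mul_conj_sub_eq_of_norm_sub_eq {z a p : ℂ} (h : ‖z - p‖ = ‖a - p‖) :
    (z - p) * conj (z - p) = (a - p) * conj (a - p) := by
  rw [mul_conj', mul_conj', h]

lemma conj_two_mul_mul_div_add {a c : ℂ} (ha : ‖a‖ = 1) (hc : ‖c‖ = 1) (hac : a + c ≠ 0) :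
    conj (2 * a * c / (a + c)) = 2 / (a + c) := by
  have ha0 : a ≠ 0 := norm_ne_zero_iff.mp (by simp [ha])
  have hc0 : c ≠ 0 := norm_ne_zero_iff.mp (by simp [hc])
  simp only [map_div₀, map_mul, map_add, map_ofNat, ← inv_eq_conj ha, ← inv_eq_conj hc,
    inv_add_inv ha0 hc0]
  field_simp

lemma mul_conj_add_one_mul_eq_of_norm_sub_eq {a c z : ℂ} (ha : ‖a‖ = 1) (hc : ‖c‖ = 1)
    (hac : a + c ≠ 0) (hz : ‖z - 2 * a * c / (a + c)‖ = ‖a - 2 * a * c / (a + c)‖) :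
    (z * conj z + 1) * (a + c) = 2 * z + 2 * a * c * conj z := by
  have hp := conj_two_mul_mul_div_add ha hc hac
  have hcirc := mul_conj_sub_eq_of_norm_sub_eq hz
  simp only [map_sub, hp, ← inv_eq_conj ha] at hcirc
  have ha0 : a ≠ 0 := norm_ne_zero_iff.mp (by simp [ha])
  field_simp at hcirc
  refine mul_left_cancel₀ hac ?_
  linear_combination hcirc

theorem intersection_satisfies_quadratic (a b c d z : ℂ)
    (ha : ‖a‖ = 1) (hb : ‖b‖ = 1)
    (hc : ‖c‖ = 1) (hd : ‖d‖ = 1)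
    (hac : a + c ≠ 0) (hbd : b + d ≠ 0)
    (hz1 : ‖z - 2 * a * c / (a + c)‖ = ‖a - 2 * a * c / (a + c)‖)
    (hz2 : ‖z - 2 * b * d / (b + d)‖ = ‖b - 2 * b * d / (b + d)‖) :
    (a - b + c - d) * z ^ 2 - 2 * (a * c - b * d) * z +
      (a * c * (b + d) - b * d * (a + c)) = 0 := by
  have e1 := mul_conj_add_one_mul_eq_of_norm_sub_eq ha hc hac hz1
  have e2 := mul_conj_add_one_mul_eq_of_norm_sub_eq hb hd hbd hz2
  have hw : z * conj z + 1 ≠ 0 := by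
    rw [mul_conj']
    exact_mod_cast (by positivity : (0 : ℝ) < ‖z‖ ^ 2 + 1).ne'
  refine (mul_eq_zero.mp ?_).resolve_left hw
  linear_combination (z ^ 2 - b * d) * e1 + (a * c - z ^ 2) * e2
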